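/- Let 0 < p < 1/2, q = 1 − p, and for k ≥ 1 let A_k be the (k+1)×(k+1) strong-reflection matrix. Define Q_k(z) = det(B_k(z)) for k ≥ 1, where B_k(z) is the matrix I − z A_k with its first row (index 0) replaced by the all-ones row vector, and set Q_0(z) = 1 and Q_{−1}(z) = 0. Then for all k ≥ 1, Q_k(z) = Q_{k−1}(z) − p q z² Q_{k−2}(z) + p^{k−1} z^k. -/

import Mathlib

open Matrix BigOperators

/-- The `(k+1) × (k+1)` strong-reflection matrix: nonzero entries are
`A(0,1) = 1-p`, `A(1,0) = 1`, `A(i,i-1) = p` for `2 ≤ i ≤ k`,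
`A(i,i+1) = 1-p` for `1 ≤ i ≤ k-1`. -/
noncomputable def strongA (p : ℝ) (k : ℕ) : Matrix (Fin (k + 1)) (Fin (k + 1)) ℝ :=
  fun i j =>
    if (i : ℕ) = 0 ∧ (j : ℕ) = 1 then 1 - p
    else if (i : ℕ) = 1 ∧ (j : ℕ) = 0 then 1
    else if 2 ≤ (i : ℕ) ∧ (j : ℕ) + 1 = (i : ℕ) then p
    else if 1 ≤ (i : ℕ) ∧ (j : ℕ) = (i : ℕ) + 1 then 1 - p
    else 0

/-- Index-shifted sequence of numerators: `Qdet p z (k+1)` is the quantity `Q_k(z)`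
of the paper, namely `Q_{-1}(z) = 0`, `Q_0(z) = 1`, and for `k ≥ 1`,
`Q_k(z) = det B_k(z)` where `B_k(z)` is `I - z A_k` with first row replaced by ones. -/
noncomputable def Qdet (p z : ℝ) : ℕ → ℝ
  | 0 => 0
  | j + 1 =>
    if j = 0 then 1 else ((1 - z • strongA p j).updateRow 0 (fun _ => 1)).det

/-!
The last column of `B_k(z)` is `e₀ - q z e_{k-1} + e_k`, and the determinant is linear in it.
With last column `e₀`, expanding along that column leaves the minor on rows `1, …, k` and
columns `0, …, k-1`, which is upper triangular with diagonal `-z, -pz, …, -pz`; this gives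
`p^{k-1} z^k`. With last column `-q z e_{k-1} + e_k`, the last row and column vanish outside the
last two positions, so the two-step Laplace expansion familiar from tridiagonal determinants
gives `Q_{k-1} - p q z² Q_{k-2}`, the leading principal minors of `B_k` being `B_{k-1}`, `B_{k-2}`.
-/

namespace Matrix

variable {R : Type*} [CommRing R] {n : ℕ}

theorem det_eq_mul_det_submatrix_castSucc (M : Matrix (Fin (n + 1)) (Fin (n + 1)) R)
    (h : ∀ i : Fin n, M i.castSucc (Fin.last n) = 0) :
    M.det = M (Fin.last n) (Fin.last n) * (M.submatrix Fin.castSucc Fin.castSucc).det := by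
  rw [det_succ_column M (Fin.last n), Fin.sum_univ_castSucc]
  simp [h, ← two_mul, pow_mul]

theorem det_eq_neg_one_pow_mul_det_submatrix_succ_castSucc
    (M : Matrix (Fin (n + 1)) (Fin (n + 1)) R) (h : ∀ i : Fin n, M i.succ (Fin.last n) = 0) :
    M.det = (-1) ^ n * M 0 (Fin.last n) * (M.submatrix Fin.succ Fin.castSucc).det := by
  rw [det_succ_column M (Fin.last n), Fin.sum_univ_succ]
  simp [h]

theorem det_eq_sub_of_last_row_col_eq_zero (M : Matrix (Fin (n + 2)) (Fin (n + 2)) R)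
    (hrow : ∀ j : Fin n, M (Fin.last _) j.castSucc.castSucc = 0)
    (hcol : ∀ i : Fin n, M i.castSucc.castSucc (Fin.last _) = 0) :
    M.det = M (Fin.last _) (Fin.last _) * (M.submatrix Fin.castSucc Fin.castSucc).det -
      M (Fin.last _) (Fin.last n).castSucc * M (Fin.last n).castSucc (Fin.last _) *
        ((M.submatrix Fin.castSucc Fin.castSucc).submatrix Fin.castSucc Fin.castSucc).det := by
  have hminor : (M.submatrix Fin.castSucc (Fin.last n).castSucc.succAbove).det =
      M (Fin.last n).castSucc (Fin.last _) *
        ((M.submatrix Fin.castSucc Fin.castSucc).submatrix Fin.castSucc Fin.castSucc).det := by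
    rw [det_eq_mul_det_submatrix_castSucc]
    · have hcols : (Fin.last n).castSucc.succAbove ∘ Fin.castSucc = Fin.castSucc ∘ Fin.castSucc :=
        funext fun j => Fin.succAbove_castSucc_of_lt _ _ (Fin.castSucc_lt_last j)
      simp [hcols]
    · intro i
      simpa using hcol i
  rw [det_succ_row M (Fin.last _), Fin.sum_univ_castSucc, Fin.sum_univ_castSucc]
  simp [hrow, hminor]
  ring

end Matrix

noncomputable def strongB (p z : ℝ) (k : ℕ) : Matrix (Fin (k + 1)) (Fin (k + 1)) ℝ :=
  (1 - z • strongA p k).updateRow 0 fun _ => 1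

/-- The entries of `strongB p z k` depend on the index values only, not on `k`. -/
def strongBEntry (p z : ℝ) (i j : ℕ) : ℝ :=
  if i = 0 then 1
  else if i = j then 1
  else if i = 1 ∧ j = 0 then -z
  else if j + 1 = i then -(p * z)
  else if j = i + 1 then -((1 - p) * z)
  else 0

section StrongB

variable (p z : ℝ)

theorem strongB_apply (k : ℕ) (i j : Fin (k + 1)) : strongB p z k i j = strongBEntry p z i j := by
  simp only [strongB, strongBEntry, strongA, updateRow_apply, Matrix.sub_apply,
    Matrix.smul_apply, one_apply, smul_eq_mul, Fin.ext_iff, Fin.val_zero]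
  grind

theorem strongB_submatrix_castSucc (k : ℕ) :
    (strongB p z (k + 1)).submatrix Fin.castSucc Fin.castSucc = strongB p z k := by
  ext i j
  simp [strongB_apply]

theorem det_strongB_submatrix_succ_castSucc (k : ℕ) :
    ((strongB p z (k + 1)).submatrix Fin.succ Fin.castSucc).det = -z * (-(p * z)) ^ k := by
  rw [det_of_isUpperTriangular, Fin.prod_univ_succ]
  · simp [strongB_apply, strongBEntry]
  · intro i j (hij : j < i)
    rw [Fin.lt_def] at hij
    simp only [submatrix_apply, strongB_apply, strongBEntry, Fin.val_succ, Fin.val_castSucc]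
    grind

theorem Qdet_succ (k : ℕ) : Qdet p z (k + 1) = (strongB p z k).det := by
  rcases k with _ | k
  · simp [Qdet, strongB]
  · rfl

theorem det_strongB_updateCol_last_single_zero (n : ℕ) :
    ((strongB p z (n + 1)).updateCol (Fin.last _) (Pi.single 0 1)).det =
      p ^ n * z ^ (n + 1) := by
  have htail : ((strongB p z (n + 1)).updateCol (Fin.last _) (Pi.single 0 1)).submatrix
      Fin.succ Fin.castSucc = (strongB p z (n + 1)).submatrix Fin.succ Fin.castSucc := by
    ext i j
    simp [Fin.castSucc_ne_last]
  rw [det_eq_neg_one_pow_mul_det_submatrix_succ_castSucc, htail,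
    det_strongB_submatrix_succ_castSucc]
  · have hsign : (-1 : ℝ) ^ (n + 1) * (-1) ^ (n + 1) = 1 := by rw [← mul_pow]; norm_num
    simp only [updateCol_self, Pi.single_eq_same, neg_pow (p * z)]
    linear_combination (z * (p * z) ^ n) * hsign
  · intro i
    simp

theorem det_strongB_updateCol_last_sub_single_zero (n : ℕ) :
    ((strongB p z (n + 2)).updateCol (Fin.last _)
        ((fun i => strongB p z (n + 2) i (Fin.last _)) - Pi.single 0 1)).det =
      (strongB p z (n + 1)).det - p * (1 - p) * z ^ 2 * (strongB p z n).det := by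
  have hhead : ((strongB p z (n + 2)).updateCol (Fin.last _)
      ((fun i => strongB p z (n + 2) i (Fin.last _)) - Pi.single 0 1)).submatrix
        Fin.castSucc Fin.castSucc = strongB p z (n + 1) := by
    rw [← strongB_submatrix_castSucc p z (n + 1)]
    ext i j
    simp [Fin.castSucc_ne_last]
  rw [det_eq_sub_of_last_row_col_eq_zero, hhead, strongB_submatrix_castSucc]
  · simp [strongB_apply, strongBEntry, Fin.castSucc_ne_last]
    left
    ring
  · intro j
    simp [strongB_apply, strongBEntry, Fin.castSucc_ne_last]
    grind
  · intro i
    simp [strongB_apply, strongBEntry, Pi.single_apply]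
    grind

theorem det_strongB_add_two (n : ℕ) :
    (strongB p z (n + 2)).det =
      (strongB p z (n + 1)).det - p * (1 - p) * z ^ 2 * (strongB p z n).det +
        p ^ (n + 1) * z ^ (n + 2) := by
  have hsplit := det_updateCol_add (strongB p z (n + 2)) (Fin.last _) (Pi.single 0 1)
    ((fun i => strongB p z (n + 2) i (Fin.last _)) - Pi.single 0 1)
  rw [add_sub_cancel, updateCol_eq_self, det_strongB_updateCol_last_single_zero,
    det_strongB_updateCol_last_sub_single_zero] at hsplit
  rw [hsplit]
  ring

end StrongB

theorem strong_Q_recursion_general (p q : ℝ) (hq : q = 1 - p)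
    (z : ℝ) :
    ∀ k : ℕ, 1 ≤ k →
      Qdet p z (k + 1) =
        Qdet p z k - p * q * z ^ 2 * Qdet p z (k - 1) + p ^ (k - 1) * z ^ k := by
  intro k hk
  subst hq
  obtain ⟨n, rfl⟩ : ∃ n, k = n + 1 := ⟨k - 1, by omega⟩
  rcases n with _ | n
  · rw [Qdet_succ, det_fin_two]
    simp [strongB_apply, strongBEntry, Qdet]
  · simpa only [Qdet_succ, Nat.add_sub_cancel] using det_strongB_add_two p z n

/-- `Q_k(z) = Q_{k-1}(z) - p q z² Q_{k-2}(z) + p^{k-1} z^k` for all `k ≥ 1`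
(indices shifted by one: `Qdet p z (k+1) = Q_k(z)`). -/
theorem strong_Q_recursion (p q : ℝ) (hp0 : 0 < p) (hp : p < 1 / 2) (hq : q = 1 - p)
    (z : ℝ) :
    ∀ k : ℕ, 1 ≤ k →
      Qdet p z (k + 1) =
        Qdet p z k - p * q * z ^ 2 * Qdet p z (k - 1) + p ^ (k - 1) * z ^ k :=
  strong_Q_recursion_general p q hq z
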